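/- arXiv:2411.19364 — 2 statements merged into one kernel-verified Lean document; each statement's English description precedes it below -/
import Mathlib

section
/- For all integers m ≥ 0 and r with 8 ≤ r ≤ 9, one has m + 3r − 1 ≤ ‖2^m · 6^r‖₂ ≤ m + 3r. -/
/-- `CanRepr l n m` means `n` can be expressed using exactly `m` copies of `l`
    combined with addition and multiplication (and parentheses). -/
inductive CanRepr (l : ℕ) : ℕ → ℕ → Prop
  | base : CanRepr l l 1
  | add {a b p q : ℕ} : CanRepr l a p → CanRepr l b q → CanRepr l (a + b) (p + q)
  | mul {a b p q : ℕ} : CanRepr l a p → CanRepr l b q → CanRepr l (a * b) (p + q)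

/-- The `l`-complexity `‖n‖_l`: the minimal number of `l`'s needed to express `n`
    using only addition and multiplication. (By convention `sInf ∅ = 0`.) -/
noncomputable def complexity (l n : ℕ) : ℕ := sInf {m | CanRepr l n m}

/-!
Write `2 ^ m * 6 ^ r = 2 ^ (m + r) * 3 ^ r`; the upper bound is the expression
`2 ^ m * (2 + 2 + 2) ^ r`. For the lower bound, every expression for `2 ^ a * 3 ^ β` with
`β ≤ 9` uses at least `a + 2β` twos, less one when `β ≥ 8`. By induction, a product splits as
`2 ^ i * 3 ^ j` times `2 ^ (a - i) * 3 ^ (β - j)`, and the bound is superadditive. An expression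
with `k` twos has value at most `2 ^ k`, and a sum of two expressions with at least three twos
each at most `2 ^ (k - 2)`; this size count disposes of every sum except `2 + z`. When
`4 ∣ z + 2`, `z ≡ 2 (mod 4)` cannot be a product of two even numbers, so it is again a sum and
the size count applies to it. When `a = 1`, `z = 2 * 3 ^ β - 2` is one of seven explicit
numbers, whose odd parts are primes or products of two primes and are treated by the same
argument.
-/

namespace CanRepr

variable {l n k : ℕ}

theorem pos (h : CanRepr l n k) : 0 < k := by
  induction h <;> omega

theorem dvd (h : CanRepr l n k) : l ∣ n := by
  induction h with
  | base => exact dvd_rfl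
  | add _ _ iha ihb => exact dvd_add iha ihb
  | mul _ _ iha _ => exact iha.mul_right _

theorem le (hl : 0 < l) (h : CanRepr l n k) : l ≤ n := by
  induction h with
  | base => exact le_rfl
  | add _ _ iha _ => omega
  | mul _ _ iha ihb => exact iha.trans (Nat.le_mul_of_pos_right _ (hl.trans_le ihb))

theorem le_pow (hl : 2 ≤ l) (h : CanRepr l n k) : n ≤ l ^ k := by
  induction h with
  | base => simp
  | add hx hy ihx ihy =>
    have hp := Nat.le_self_pow hx.pos.ne' l
    have hq := Nat.le_self_pow hy.pos.ne' l
    rw [pow_add]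
    nlinarith
  | mul _ _ ihx ihy => rw [pow_add]; exact Nat.mul_le_mul ihx ihy

theorem le_of_pow_le {t : ℕ} (hl : 2 ≤ l) (h : CanRepr l n k) (ht : l ^ t ≤ n) : t ≤ k :=
  (Nat.pow_le_pow_iff_right hl).1 (ht.trans (h.le_pow hl))

theorem lt_of_pow_lt {t : ℕ} (hl : 2 ≤ l) (h : CanRepr l n k) (ht : l ^ t < n) : t < k :=
  (Nat.pow_lt_pow_iff_right hl).1 (ht.trans_le (h.le_pow hl))

theorem pow (h : CanRepr l n k) : ∀ {r : ℕ}, 0 < r → CanRepr l (n ^ r) (k * r)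
  | 1, _ => by simpa using h
  | r + 2, _ => by simpa [pow_succ, Nat.mul_succ] using (h.pow r.succ_pos).mul h

theorem base_pow_mul (h : CanRepr l n k) : ∀ m : ℕ, CanRepr l (l ^ m * n) (m + k)
  | 0 => by simpa using h
  | m + 1 => by
    have := base.mul (h.base_pow_mul m)
    rwa [← mul_assoc, ← pow_succ', ← add_assoc, add_comm 1 m] at this

/-- Only a summand `2` escapes the size count, leaving `z = x + y - 2` to be represented. -/
theorem add_le {x y p q c : ℕ} (hx : CanRepr 2 x p) (hy : CanRepr 2 y q)
    (hlt : 2 ^ c + 4 < x + y) (htwo : ∀ z k, CanRepr 2 z k → z + 2 = x + y → c + 2 ≤ k) :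
    c + 3 ≤ p + q := by
  wlog hxy : x ≤ y generalizing x y p q
  · have := this hy hx (by omega) (fun z k hz e => htwo z k hz (by omega)) (by omega)
    omega
  have hx2 := hx.le two_pos
  have hxe := hx.dvd
  obtain rfl | rfl | hx6 : x = 2 ∨ x = 4 ∨ 6 ≤ x := by omega
  · have := htwo y q hy (add_comm _ _)
    have := hx.pos
    omega
  · have := hx.le_of_pow_le (t := 2) le_rfl le_rfl
    have := hy.lt_of_pow_lt le_rfl (show 2 ^ c < y by omega)
    omega
  · have hp := hx.lt_of_pow_lt (t := 2) le_rfl (by omega)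
    have hq := hy.lt_of_pow_lt (t := 2) le_rfl (by omega)
    have hP : 8 ≤ 2 ^ p := by simpa using Nat.pow_le_pow_right two_pos (show 3 ≤ p by omega)
    have hQ : 8 ≤ 2 ^ q := by simpa using Nat.pow_le_pow_right two_pos (show 3 ≤ q by omega)
    have : 2 ^ (c + 2) < 2 ^ (p + q) := by
      rw [pow_add, pow_add]
      nlinarith [hx.le_pow le_rfl, hy.le_pow le_rfl]
    have := (Nat.pow_lt_pow_iff_right one_lt_two).1 this
    omega

theorem add_le_of_two_pow_lt {x y p q c : ℕ} (hx : CanRepr 2 x p) (hy : CanRepr 2 y q)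
    (hlt : 2 ^ (c + 1) + 4 < x + y) : c + 3 ≤ p + q := by
  rw [pow_succ] at hlt
  refine hx.add_le hy (by omega) fun z k hz hzxy => ?_
  have := hz.lt_of_pow_lt le_rfl (show 2 ^ (c + 1) < z by rw [pow_succ]; omega)
  omega

theorem le_of_mod_four_eq_two {c : ℕ} (h : CanRepr 2 n k) (hn : n % 4 = 2)
    (hlt : 2 ^ (c + 1) + 4 < n) : c + 3 ≤ k := by
  cases h with
  | base => simp at hlt
  | add hx hy => exact hx.add_le_of_two_pow_lt hy hlt
  | mul hx hy =>
    have := Nat.mul_dvd_mul hx.dvd hy.dvd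
    omega

end CanRepr

theorem Nat.eq_and_eq_or_of_mul_eq_prime_mul_prime {p q u v : ℕ} (hp : p.Prime) (hq : q.Prime)
    (h : u * v = p * q) (hu : u ≠ 1) (hv : v ≠ 1) : u = p ∧ v = q ∨ u = q ∧ v = p := by
  rcases (Nat.Prime.dvd_mul hp).1 (h ▸ dvd_mul_right p q) with ⟨u', rfl⟩ | ⟨v', rfl⟩
  · have : u' * v = q := Nat.eq_of_mul_eq_mul_left hp.pos (by rw [← h, mul_assoc])
    rcases Nat.prime_mul_iff.1 (this ▸ hq) with ⟨-, rfl⟩ | ⟨-, rfl⟩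
    · exact absurd rfl hv
    · left; simp_all
  · have : u * v' = q := Nat.eq_of_mul_eq_mul_left hp.pos (by rw [← h, mul_left_comm])
    rcases Nat.prime_mul_iff.1 (this ▸ hq) with ⟨-, rfl⟩ | ⟨-, rfl⟩
    · right; simp_all
    · exact absurd rfl hu

def CostsAtLeast (M c : ℕ) : Prop := ∀ a k, CanRepr 2 (2 ^ a * M) k → a + c ≤ k

namespace CostsAtLeast

variable {M c : ℕ}

theorem of_two_pow_le (h : 2 ^ c ≤ M) : CostsAtLeast M c := fun a _ hk =>
  hk.le_of_pow_le le_rfl (by rw [pow_add]; exact Nat.mul_le_mul_left _ h)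

theorem of_two_pow_lt (h : 2 ^ c < M) : CostsAtLeast M (c + 1) := fun a _ hk =>
  hk.lt_of_pow_lt (t := a + c) le_rfl
    (by rw [pow_add]; exact Nat.mul_lt_mul_of_pos_left h (by positivity))

theorem of_add_of_mul (hM : Odd M) (hM1 : 1 < M)
    (hadd : ∀ a x y p q, 1 ≤ a → CanRepr 2 x p → CanRepr 2 y q → x + y = 2 ^ a * M →
      a + c ≤ p + q)
    (hmul : ∀ u v, u * v = M → 1 < u → 1 < v →
      ∃ cu cv, CostsAtLeast u cu ∧ CostsAtLeast v cv ∧ c ≤ cu + cv) :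
    CostsAtLeast M c := by
  intro a
  induction a using Nat.strong_induction_on with
  | _ a ih =>
  intro k hk
  have ha : 1 ≤ a := by
    by_contra! h0
    obtain rfl : a = 0 := by omega
    rw [pow_zero, one_mul] at hk
    exact Nat.not_even_iff_odd.2 hM (even_iff_two_dvd.2 hk.dvd)
  have h2a : 2 ≤ 2 ^ a := Nat.le_self_pow (by omega) 2
  generalize hn : 2 ^ a * M = n at hk
  cases hk with
  | base => nlinarith
  | add hx hy => exact hadd a _ _ _ _ ha hx hy hn.symm
  | @mul x y p q hx hy =>
    obtain ⟨i, j, u, v, hij, rfl, rfl, rfl⟩ :=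
      mul_eq_mul_prime_pow Nat.prime_two.prime (hn.symm.trans (mul_comm _ _))
    rw [mul_comm] at hx hy
    have hu : 0 < u := Nat.pos_of_mul_pos_right (by omega : 0 < u * v)
    have hv : 0 < v := Nat.pos_of_mul_pos_left (by omega : 0 < u * v)
    have hi := hx.le_of_pow_le le_rfl (Nat.le_mul_of_pos_right _ hu)
    have hj := hy.le_of_pow_le le_rfl (Nat.le_mul_of_pos_right _ hv)
    obtain rfl | hu1 : u = 1 ∨ 1 < u := by omega
    · have := hx.le two_pos
      have : i ≠ 0 := by rintro rfl; simp at this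
      have := ih j (by omega) q (by rwa [one_mul])
      omega
    obtain rfl | hv1 : v = 1 ∨ 1 < v := by omega
    · have := hy.le two_pos
      have : j ≠ 0 := by rintro rfl; simp at this
      have := ih i (by omega) p (by rwa [mul_one])
      omega
    obtain ⟨cu, cv, hcu, hcv, hc⟩ := hmul u v rfl hu1 hv1
    have := hcu i p hx
    have := hcv j q hy
    omega

theorem of_two_pow_add_two_lt (hM : Odd M) (hlt : 2 ^ c + 2 < M)
    (hmul : ∀ u v, u * v = M → 1 < u → 1 < v →
      ∃ cu cv, CostsAtLeast u cu ∧ CostsAtLeast v cv ∧ c + 2 ≤ cu + cv) :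
    CostsAtLeast M (c + 2) := by
  refine of_add_of_mul hM (one_lt_two.trans ((Nat.le_add_left 2 _).trans_lt hlt))
    (fun a x y p q ha hx hy hxy => ?_) hmul
  have h2a : 2 ≤ 2 ^ a := Nat.le_self_pow (by omega) 2
  have : 2 ^ (a + c - 1 + 1) + 4 < x + y := by
    rw [show a + c - 1 + 1 = a + c by omega, pow_add, hxy]
    nlinarith
  have := hx.add_le_of_two_pow_lt hy this
  omega

theorem of_prime (hp : M.Prime) (hodd : Odd M) (hlt : 2 ^ c + 2 < M) :
    CostsAtLeast M (c + 2) :=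
  of_two_pow_add_two_lt hodd hlt fun _ _ huv hu hv =>
    absurd (huv ▸ hp) (Nat.not_prime_mul hu.ne' hv.ne')

theorem of_prime_mul_prime {p q c cp cq : ℕ} (hp : p.Prime) (hq : q.Prime)
    (hodd : Odd (p * q)) (hlt : 2 ^ c + 2 < p * q) (hcp : CostsAtLeast p cp)
    (hcq : CostsAtLeast q cq) (hc : c + 2 ≤ cp + cq) : CostsAtLeast (p * q) (c + 2) :=
  of_two_pow_add_two_lt hodd hlt fun u v huv hu hv => by
    rcases Nat.eq_and_eq_or_of_mul_eq_prime_mul_prime hp hq huv hu.ne' hv.ne' with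
      ⟨rfl, rfl⟩ | ⟨rfl, rfl⟩
    · exact ⟨cp, cq, hcp, hcq, hc⟩
    · exact ⟨cq, cp, hcq, hcp, by omega⟩

end CostsAtLeast

/- The odd parts of `2 * 3 ^ β - 2` for `3 ≤ β ≤ 9`: `52 = 2² * 13`, `160 = 2⁵ * 5`,
`484 = 2² * 11²`, `1456 = 2⁴ * 7 * 13`, `4372 = 2² * 1093`, `13120 = 2⁶ * 5 * 41` and
`39364 = 2² * 13 * 757`. -/

theorem costsAtLeast_7 : CostsAtLeast 7 4 :=
  .of_prime (c := 2) (by norm_num) (by decide) (by norm_num)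

theorem costsAtLeast_13 : CostsAtLeast 13 5 :=
  .of_prime (c := 3) (by norm_num) (by decide) (by norm_num)

theorem costsAtLeast_1093 : CostsAtLeast 1093 12 :=
  .of_prime (c := 10) (by norm_num) (by decide) (by norm_num)

theorem costsAtLeast_121 : CostsAtLeast (11 * 11) 8 :=
  .of_prime_mul_prime (c := 6) (by norm_num) (by norm_num) (by decide) (by norm_num)
    (.of_two_pow_lt (c := 3) (by norm_num)) (.of_two_pow_lt (c := 3) (by norm_num)) le_rfl

theorem costsAtLeast_91 : CostsAtLeast (7 * 13) 8 :=
  .of_prime_mul_prime (c := 6) (by norm_num) (by norm_num) (by decide) (by norm_num)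
    costsAtLeast_7 (.of_two_pow_lt (c := 3) (by norm_num)) le_rfl

theorem costsAtLeast_205 : CostsAtLeast (5 * 41) 9 :=
  .of_prime_mul_prime (c := 7) (by norm_num) (by norm_num) (by decide) (by norm_num)
    (.of_two_pow_lt (c := 2) (by norm_num)) (.of_two_pow_lt (c := 5) (by norm_num)) le_rfl

theorem costsAtLeast_9841 : CostsAtLeast (13 * 757) 15 :=
  .of_prime_mul_prime (c := 13) (by norm_num) (by norm_num) (by decide) (by norm_num)
    costsAtLeast_13 (.of_two_pow_lt (c := 9) (by norm_num)) le_rfl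

def threePowCost (β : ℕ) : ℕ := if β < 8 then 2 * β else 2 * β - 1

theorem threePowCost_le_add {β j : ℕ} (hβ : β ≤ 9) (hj : j ≤ β) :
    threePowCost β ≤ threePowCost j + threePowCost (β - j) := by
  unfold threePowCost; split_ifs <;> omega

/-- The size count behind the sum case: it fails at `β = 10`, and for `β ≥ 8` only holds thanks
to the defect of `threePowCost`. -/
theorem two_pow_threePowCost_sub_three_add_three_le {β : ℕ} (h3 : 3 ≤ β) (h9 : β ≤ 9) :
    2 ^ (threePowCost β - 3) + 3 ≤ 3 ^ β := by
  interval_cases β <;> decide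

theorem threePowCost_le_of_add_two_eq {β z k : ℕ} (h3 : 3 ≤ β) (h9 : β ≤ 9)
    (hz : z + 2 = 2 * 3 ^ β) (h : CanRepr 2 z k) : threePowCost β ≤ k := by
  interval_cases β <;> obtain rfl : z = _ := Nat.eq_sub_of_add_eq hz <;>
    simp only [threePowCost] <;> norm_num at h ⊢
  · have := costsAtLeast_13 2 k h; omega
  · have := CostsAtLeast.of_two_pow_lt (M := 5) (c := 2) (by norm_num) 5 k h; omega
  · have := costsAtLeast_121 2 k h; omega
  · have := costsAtLeast_91 4 k h; omega
  · have := costsAtLeast_1093 2 k h; omega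
  · have := costsAtLeast_205 6 k h; omega
  · have := costsAtLeast_9841 2 k h; omega

theorem CanRepr.add_le_of_add_eq_two_pow_mul_three_pow {a β x y p q : ℕ} (ha : 1 ≤ a)
    (h3 : 3 ≤ β) (h9 : β ≤ 9) (hx : CanRepr 2 x p) (hy : CanRepr 2 y q)
    (hxy : x + y = 2 ^ a * 3 ^ β) : a + threePowCost β ≤ p + q := by
  have hC : 6 ≤ threePowCost β := by unfold threePowCost; split_ifs <;> omega
  set c := a + (threePowCost β - 3)
  set n := 2 ^ a * 3 ^ β
  have h2a : 2 ≤ 2 ^ a := Nat.le_self_pow (by omega) 2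
  have hsize : 2 ^ c + 3 * 2 ^ a ≤ n := by
    rw [pow_add, mul_comm 3, ← mul_add]
    exact Nat.mul_le_mul_left _ (two_pow_threePowCost_sub_three_add_three_le h3 h9)
  have htwo : ∀ z k, CanRepr 2 z k → z + 2 = x + y → c + 2 ≤ k := by
    intro z k hz hzxy
    obtain rfl | ha2 : a = 1 ∨ 2 ≤ a := by omega
    · have := threePowCost_le_of_add_two_eq h3 h9 (hzxy.trans hxy) hz
      omega
    · have h4 : 4 ∣ n := (Nat.pow_dvd_pow 2 ha2).mul_right _
      have hz4 : z % 4 = 2 := by omega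
      have h4a : 2 ^ 2 ≤ 2 ^ a := Nat.pow_le_pow_right two_pos ha2
      have := hz.le_of_mod_four_eq_two (c := c - 1) hz4
        (by rw [Nat.sub_add_cancel (by omega)]; omega)
      omega
  have := hx.add_le hy (by omega) htwo
  omega

theorem costsAtLeast_three_pow {β : ℕ} (hβ : β ≤ 9) :
    CostsAtLeast (3 ^ β) (threePowCost β) := by
  induction β using Nat.strong_induction_on with
  | _ β ih =>
  rcases Nat.lt_or_ge β 3 with hβ3 | hβ3
  · interval_cases β
    · exact .of_two_pow_le (c := 0) le_rfl
    · exact .of_two_pow_lt (c := 1) (by norm_num)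
    · exact .of_two_pow_lt (c := 3) (by norm_num)
  refine .of_add_of_mul (Odd.pow (by decide)) (Nat.one_lt_pow (by omega) (by norm_num)) ?_ ?_
  · exact fun _ _ _ _ _ ha hx hy hxy =>
      hx.add_le_of_add_eq_two_pow_mul_three_pow ha hβ3 hβ hy hxy
  · intro u v huv hu hv
    obtain ⟨j, hj, rfl⟩ := (Nat.dvd_prime_pow Nat.prime_three).1 (Dvd.intro v huv)
    obtain rfl : v = 3 ^ (β - j) := Nat.eq_of_mul_eq_mul_left (pow_pos three_pos j)
      (by rw [huv, ← pow_add, Nat.add_sub_cancel' hj])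
    have hj0 : 0 < j := Nat.pos_of_ne_zero (by rintro rfl; simp at hu)
    have hjβ : j < β := Nat.lt_of_le_of_ne hj (by rintro rfl; simp at hv)
    exact ⟨_, _, ih j hjβ (by omega), ih (β - j) (by omega) (by omega),
      threePowCost_le_add hβ hj⟩

theorem stmt_13 (m r : ℕ) (hr1 : 8 ≤ r) (hr2 : r ≤ 9) :
    m + 3 * r - 1 ≤ complexity 2 (2 ^ m * 6 ^ r) ∧
      complexity 2 (2 ^ m * 6 ^ r) ≤ m + 3 * r := by
  have hsix : CanRepr 2 6 3 := .add .base (.add .base .base)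
  have hrepr : CanRepr 2 (2 ^ m * 6 ^ r) (m + 3 * r) := by
    simpa [mul_comm] using (hsix.pow (r := r) (by omega)).base_pow_mul m
  have hsplit : 2 ^ m * 6 ^ r = 2 ^ (m + r) * 3 ^ r := by
    rw [pow_add, mul_assoc, ← mul_pow]; norm_num
  rw [hsplit] at hrepr ⊢
  have hmin : CanRepr 2 (2 ^ (m + r) * 3 ^ r) (complexity 2 _) := Nat.sInf_mem ⟨_, hrepr⟩
  have hlow := costsAtLeast_three_pow hr2 (m + r) _ hmin
  have hcost : threePowCost r = 2 * r - 1 := if_neg (by omega)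
  exact ⟨by omega, Nat.sInf_le hrepr⟩
end

section
/- For all integers m ≥ 0 and r with 1 ≤ r ≤ 4, one has ‖2^m · 10^r‖₂ = m + 4r. -/
/-!
Read an expression of `n` with `k` twos through the ratio `n / 2 ^ k ≤ 1`, which is multiplicative.
By induction on the expression, whenever this ratio is at least `625 / 2048` the number `n` is
`2 ^ c` times one of a few explicit cores whose own expressions use at most `k - c` twos: in a
product both factors keep a ratio at least as large, and what remains is a case analysis of core
times core; in a sum the cheaper summand uses at most two twos. An expression of `2 ^ m * 10 ^ r`
(`r ≤ 4`) with fewer than `m + 4 * r` twos has ratio at least `625 / 2048`, and comparing odd parts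
with the cores rules it out.
-/

theorem CanRepr.dvd_s14 {l n k : ℕ} (h : CanRepr l n k) : l ∣ n := by
  induction h with
  | base => exact dvd_rfl
  | add _ _ iha ihb => exact dvd_add iha ihb
  | mul _ _ iha _ => exact iha.mul_right _

theorem CanRepr.pos_s14 {l n k : ℕ} (hl : 0 < l) (h : CanRepr l n k) : 0 < n := by
  induction h with
  | base => exact hl
  | add _ _ iha _ => omega
  | mul _ _ iha ihb => exact Nat.mul_pos iha ihb

theorem CanRepr.one_le {l n k : ℕ} (h : CanRepr l n k) : 1 ≤ k := by
  induction h <;> omega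

theorem CanRepr.le_pow_s14 {l n k : ℕ} (hl : 2 ≤ l) (h : CanRepr l n k) : n ≤ l ^ k := by
  induction h with
  | base => simp
  | @add a b p q ha hb iha ihb =>
    have hp : 2 ≤ l ^ p := hl.trans (Nat.le_self_pow (by have := ha.one_le; omega) l)
    have hq : 2 ≤ l ^ q := hl.trans (Nat.le_self_pow (by have := hb.one_le; omega) l)
    rw [pow_add]
    nlinarith
  | mul _ _ iha ihb => rw [pow_add]; exact Nat.mul_le_mul iha ihb

theorem CanRepr.pow_mul {l a b p q : ℕ} (ha : CanRepr l a p) (hb : CanRepr l b q) (e : ℕ) :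
    CanRepr l (a ^ e * b) (p * e + q) := by
  induction e with
  | zero => simpa using hb
  | succ e ih => convert ha.mul ih using 1 <;> ring

namespace TwoComplexity

theorem canRepr_ten : CanRepr 2 10 4 :=
  (CanRepr.base.mul (CanRepr.base.mul .base)).add .base

theorem canRepr_two_pow_mul_ten_pow (m : ℕ) {r : ℕ} (hr : 1 ≤ r) :
    CanRepr 2 (2 ^ m * 10 ^ r) (m + 4 * r) := by
  obtain ⟨s, rfl⟩ := Nat.exists_eq_add_of_le' hr
  convert CanRepr.base.pow_mul (canRepr_ten.pow_mul canRepr_ten s) m using 1 <;> ring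

/-- `n / 2 ^ k ≥ 625 / 2048`, the ratio of `2 ^ m * 10 ^ 4` to `2 ^ (m + 15)`. -/
def LowDefect (n k : ℕ) : Prop := 625 * 2 ^ k ≤ 2048 * n

/-- `Core v j`: `v` has an expression with `j` twos among `1` (with none), `2 ^ (x + 1) + 2`,
`(2 ^ (x + 1) + 2) * (2 ^ (y + 1) + 2)` and `2 ^ b * (2 ^ (y + 1) + 2) + 2`; the values are written
so that their odd parts are visible. -/
inductive Core : ℕ → ℕ → Prop
  | one : Core 1 0
  | single {x : ℕ} : 1 ≤ x → Core (2 * (2 ^ x + 1)) (x + 2)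
  | prod {x y : ℕ} : 1 ≤ x → 2 ≤ y → Core (4 * ((2 ^ x + 1) * (2 ^ y + 1))) (x + y + 4)
  | nested {b y : ℕ} : 1 ≤ b → 1 ≤ y → Core (2 * (2 ^ b * (2 ^ y + 1) + 1)) (b + y + 3)

def IsStandard (n k : ℕ) : Prop := ∃ c v j, Core v j ∧ c + j ≤ k ∧ n = 2 ^ c * v

theorem Core.isStandard {v j : ℕ} (h : Core v j) : IsStandard v j :=
  ⟨0, v, j, h, by omega, by simp⟩

theorem isStandard_two_pow {e k : ℕ} (h : e ≤ k) : IsStandard (2 ^ e) k :=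
  ⟨e, 1, 0, .one, by omega, by simp⟩

theorem IsStandard.mono {n k k' : ℕ} (h : IsStandard n k) (hk : k ≤ k') : IsStandard n k' := by
  obtain ⟨c, v, j, hv, hc, rfl⟩ := h
  exact ⟨c, v, j, hv, by omega, rfl⟩

theorem IsStandard.two_pow_mul {n k : ℕ} (h : IsStandard n k) (e : ℕ) :
    IsStandard (2 ^ e * n) (e + k) := by
  obtain ⟨c, v, j, hv, hc, rfl⟩ := h
  exact ⟨e + c, v, j, hv, by omega, by rw [pow_add, mul_assoc]⟩

theorem LowDefect.of_two_pow_mul {c v j k : ℕ} (h : LowDefect (2 ^ c * v) k) (hk : c + j ≤ k) :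
    LowDefect v j := by
  unfold LowDefect at *
  have : 2 ^ (j + c) ≤ 2 ^ k := Nat.pow_le_pow_right two_pos (by omega)
  rw [pow_add] at this
  refine Nat.le_of_mul_le_mul_right (c := 2 ^ c) ?_ (Nat.two_pow_pos c)
  nlinarith

theorem LowDefect.of_mul_right {a b p q : ℕ} (h : LowDefect (a * b) (p + q)) (hb : b ≤ 2 ^ q) :
    LowDefect a p := by
  unfold LowDefect at *
  rw [pow_add] at h
  refine Nat.le_of_mul_le_mul_right (c := 2 ^ q) ?_ (Nat.two_pow_pos q)
  nlinarith

theorem LowDefect.of_mul_left {a b p q : ℕ} (h : LowDefect (a * b) (p + q)) (ha : a ≤ 2 ^ p) :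
    LowDefect b q := by
  rw [mul_comm, add_comm] at h
  exact h.of_mul_right ha

theorem LowDefect.of_two_add {b q : ℕ} (hb : 2 ≤ b) (h : LowDefect (2 + b) (q + 1)) :
    LowDefect b q := by
  unfold LowDefect at *
  rw [pow_succ] at h
  omega

theorem not_lowDefect_two_add {b q : ℕ} (hb : 32 * b ≤ 15 * 2 ^ q) (hq : 4 ≤ q) :
    ¬ LowDefect (2 + b) (q + 1) := by
  unfold LowDefect
  have : 2 ^ 4 ≤ 2 ^ q := Nat.pow_le_pow_right two_pos hq
  rw [pow_succ]
  omega

theorem not_lowDefect_mul {u v i j α β γ δ : ℕ} (hu : α * u ≤ β * 2 ^ i) (hv : γ * v ≤ δ * 2 ^ j)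
    (hαγ : 2048 * (β * δ) < 625 * (α * γ)) : ¬ LowDefect (u * v) (i + j) := by
  unfold LowDefect
  intro h
  rw [pow_add] at h
  have hpos : 0 < 2 ^ i * 2 ^ j := by positivity
  have key : 625 * (α * γ) * (2 ^ i * 2 ^ j) ≤ 2048 * (β * δ) * (2 ^ i * 2 ^ j) :=
    calc 625 * (α * γ) * (2 ^ i * 2 ^ j) = 625 * (2 ^ i * 2 ^ j) * (α * γ) := by ring
      _ ≤ 2048 * (u * v) * (α * γ) := Nat.mul_le_mul_right _ h
      _ = 2048 * ((α * u) * (γ * v)) := by ring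
      _ ≤ 2048 * ((β * 2 ^ i) * (δ * 2 ^ j)) := Nat.mul_le_mul_left _ (Nat.mul_le_mul hu hv)
      _ = 2048 * (β * δ) * (2 ^ i * 2 ^ j) := by ring
  exact absurd (Nat.le_of_mul_le_mul_right key hpos) (not_le.2 hαγ)

theorem le_two_pow_mul {α β v j c k : ℕ} (h : α * v ≤ β * 2 ^ j) (hk : c + j ≤ k) :
    α * (2 ^ c * v) ≤ β * 2 ^ k := by
  have : 2 ^ (c + j) ≤ 2 ^ k := Nat.pow_le_pow_right two_pos hk
  rw [pow_add] at this
  nlinarith [Nat.two_pow_pos c]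

theorem single_ratio_le {x : ℕ} (hx : 2 ≤ x) : 8 * (2 * (2 ^ x + 1)) ≤ 5 * 2 ^ (x + 2) := by
  have : 2 ^ 2 ≤ 2 ^ x := Nat.pow_le_pow_right two_pos hx
  rw [pow_add]
  omega

theorem prod_ratio_le {x y : ℕ} (hx : 1 ≤ x) (hy : 2 ≤ y) :
    32 * (4 * ((2 ^ x + 1) * (2 ^ y + 1))) ≤ 15 * 2 ^ (x + y + 4) := by
  have h1 : 2 ^ 1 ≤ 2 ^ x := Nat.pow_le_pow_right two_pos hx
  have h2 : 2 ^ 2 ≤ 2 ^ y := Nat.pow_le_pow_right two_pos hy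
  rw [pow_add, pow_add]
  nlinarith

theorem nested_ratio_le {b y : ℕ} (hb : 1 ≤ b) (hy : 1 ≤ y) :
    32 * (2 * (2 ^ b * (2 ^ y + 1) + 1)) ≤ 15 * 2 ^ (b + y + 3) := by
  have h1 : 2 ^ 1 ≤ 2 ^ b := Nat.pow_le_pow_right two_pos hb
  have h2 : 2 ^ 1 ≤ 2 ^ y := Nat.pow_le_pow_right two_pos hy
  rw [pow_add, pow_add]
  nlinarith

theorem Core.eq_one_or_single_or_ratio_le {v j : ℕ} (h : Core v j) :
    v = 1 ∧ j = 0 ∨ (∃ x, 1 ≤ x ∧ v = 2 * (2 ^ x + 1) ∧ j = x + 2) ∨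
      32 * v ≤ 15 * 2 ^ j ∧ 4 ≤ j := by
  cases h with
  | one => exact .inl ⟨rfl, rfl⟩
  | single hx => exact .inr (.inl ⟨_, hx, rfl, rfl⟩)
  | prod hx hy => exact .inr (.inr ⟨prod_ratio_le hx hy, by omega⟩)
  | nested hb hy => exact .inr (.inr ⟨nested_ratio_le hb hy, by omega⟩)

theorem IsStandard.two_add {b q : ℕ} (h : IsStandard b q) (hb : 2 ≤ b)
    (hd : LowDefect (2 + b) (q + 1)) : IsStandard (2 + b) (q + 1) := by
  obtain ⟨c, v, j, hv, hc, rfl⟩ := h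
  rcases hv.eq_one_or_single_or_ratio_le with ⟨rfl, rfl⟩ | ⟨x, hx, rfl, rfl⟩ | ⟨hratio, hj⟩
  · obtain _ | _ | c := c
    · simp at hb
    · exact isStandard_two_pow (e := 2) (by omega)
    · exact ⟨0, _, _, .single (x := c + 1) (by omega), by omega, by ring⟩
  · obtain _ | c := c
    · obtain rfl | hx := eq_or_lt_of_le hx
      · exact isStandard_two_pow (e := 3) (by omega)
      · obtain ⟨x, rfl⟩ := Nat.exists_eq_add_of_le' hx
        exact ⟨1, _, _, .single (x := x + 1) (by omega), by omega, by ring⟩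
    · exact ⟨0, _, _, .nested (b := c + 1) (by omega) hx, by omega, by ring⟩
  · exact absurd hd (not_lowDefect_two_add (le_two_pow_mul hratio hc) (by omega))

theorem isStandard_add {a b p q : ℕ} (ha : CanRepr 2 a p) (hb : CanRepr 2 b q)
    (ihb : LowDefect b q → IsStandard b q) (hpq : p ≤ q) (hd : LowDefect (a + b) (p + q)) :
    IsStandard (a + b) (p + q) := by
  have ha2 := ha.dvd_s14
  have hb2 := hb.dvd_s14
  have ha0 := ha.pos_s14 two_pos
  have hb0 := hb.pos_s14 two_pos
  have hap := ha.le_pow_s14 le_rfl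
  have hbq := hb.le_pow_s14 le_rfl
  have hp1 := ha.one_le
  have hpow : 2 ^ p ≤ 2 ^ q := Nat.pow_le_pow_right two_pos hpq
  unfold LowDefect at hd
  rw [pow_add] at hd
  have hp2 : p ≤ 2 := by
    by_contra! hp
    have : 2 ^ 3 ≤ 2 ^ p := Nat.pow_le_pow_right two_pos hp
    nlinarith
  obtain rfl | rfl : p = 1 ∨ p = 2 := by omega
  · obtain rfl : a = 2 := by omega
    rw [add_comm 1]
    have hd' : LowDefect (2 + b) (q + 1) := by unfold LowDefect; rw [pow_succ]; linarith
    exact (ihb (hd'.of_two_add (by omega))).two_add (by omega) hd'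
  · have hq : q ≤ 4 := by
      by_contra! hq
      have : 2 ^ 5 ≤ 2 ^ q := Nat.pow_le_pow_right two_pos hq
      omega
    have : (a + b = 6 ∨ a + b = 8) ∧ q = 2 ∨ (a + b = 10 ∨ a + b = 12) ∧ q = 3 ∨
        a + b = 20 ∧ q = 4 := by
      interval_cases q <;> simp only [Nat.reducePow] at hd hbq hap <;> omega
    rcases this with ⟨hs | hs, rfl⟩ | ⟨hs | hs, rfl⟩ | ⟨hs, rfl⟩ <;> rw [hs]
    · exact ⟨0, _, _, .single (x := 1) le_rfl, by omega, by norm_num⟩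
    · exact isStandard_two_pow (e := 3) (by omega)
    · exact ⟨0, _, _, .single (x := 2) (by omega), by omega, by norm_num⟩
    · exact ⟨1, _, _, .single (x := 1) le_rfl, by omega, by norm_num⟩
    · exact ⟨1, _, _, .single (x := 2) (by omega), by omega, by norm_num⟩

theorem isStandard_single_mul {x v j : ℕ} (hx : 1 ≤ x) (hv : Core v j)
    (hd : LowDefect (2 * (2 ^ x + 1) * v) (x + 2 + j)) :
    IsStandard (2 * (2 ^ x + 1) * v) (x + 2 + j) := by
  cases hv with
  | one => simpa using (Core.single hx).isStandard
  | @single y hy =>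
    rcases Nat.lt_or_ge 1 y with hy2 | hy1
    · exact ⟨0, _, _, .prod hx hy2, by omega, by ring⟩
    rcases Nat.lt_or_ge 1 x with hx2 | hx1
    · exact ⟨0, _, _, .prod hy hx2, by omega, by ring⟩
    obtain rfl : x = 1 := by omega
    obtain rfl : y = 1 := by omega
    exact ⟨1, _, _, .single (x := 3) (by omega), by omega, by norm_num⟩
  | @prod y z hy hz =>
    rcases Nat.lt_or_ge 1 x with hx | hx
    · exact absurd hd (not_lowDefect_mul (single_ratio_le hx) (prod_ratio_le hy hz) (by norm_num))
    obtain rfl : x = 1 := by omega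
    have hY : 2 ^ 1 ≤ 2 ^ y := Nat.pow_le_pow_right two_pos hy
    have hZ : 2 ^ 2 ≤ 2 ^ z := Nat.pow_le_pow_right two_pos hz
    unfold LowDefect at hd
    have key : 80000 * (2 ^ y * 2 ^ z) ≤ 49152 * ((2 ^ y + 1) * (2 ^ z + 1)) := by
      rw [show 1 + 2 + (y + z + 4) = y + z + 7 by omega, pow_add, pow_add] at hd
      nlinarith
    obtain rfl : y = 1 := by
      by_contra hy'
      have : 2 ^ 2 ≤ 2 ^ y := Nat.pow_le_pow_right two_pos (by omega)
      nlinarith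
    have hz3 : z ≤ 3 := by
      by_contra! hz'
      have : 2 ^ 4 ≤ 2 ^ z := Nat.pow_le_pow_right two_pos hz'
      omega
    obtain rfl | rfl : z = 2 ∨ z = 3 := by omega
    · exact ⟨1, _, _, .prod (x := 3) (y := 2) (by omega) le_rfl, by omega, by norm_num⟩
    · exact ⟨1, _, _, .prod (x := 3) (y := 3) (by omega) (by omega), by omega, by norm_num⟩
  | @nested b y hb hy =>
    rcases Nat.lt_or_ge 1 x with hx | hx
    · exact absurd hd (not_lowDefect_mul (single_ratio_le hx) (nested_ratio_le hb hy) (by norm_num))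
    obtain rfl : x = 1 := by omega
    have hB : 2 ^ 1 ≤ 2 ^ b := Nat.pow_le_pow_right two_pos hb
    have hY : 2 ^ 1 ≤ 2 ^ y := Nat.pow_le_pow_right two_pos hy
    unfold LowDefect at hd
    have key : 40000 * (2 ^ b * 2 ^ y) ≤ 24576 * (2 ^ b * (2 ^ y + 1) + 1) := by
      rw [show 1 + 2 + (b + y + 3) = b + y + 6 by omega, pow_add, pow_add] at hd
      nlinarith
    obtain rfl : y = 1 := by
      by_contra hy'
      have : 2 ^ 2 ≤ 2 ^ y := Nat.pow_le_pow_right two_pos (by omega)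
      nlinarith
    obtain rfl : b = 1 := by
      by_contra hb'
      have : 2 ^ 2 ≤ 2 ^ b := Nat.pow_le_pow_right two_pos (by omega)
      omega
    exact ⟨1, _, _, .nested (b := 2) (y := 2) (by omega) (by omega), by omega, by norm_num⟩

theorem Core.mul {v₁ j₁ v₂ j₂ : ℕ} (h₁ : Core v₁ j₁) (h₂ : Core v₂ j₂)
    (hd : LowDefect (v₁ * v₂) (j₁ + j₂)) : IsStandard (v₁ * v₂) (j₁ + j₂) := by
  rcases h₁.eq_one_or_single_or_ratio_le with ⟨rfl, rfl⟩ | ⟨x, hx, rfl, rfl⟩ | ⟨hl₁, -⟩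
  · simpa using h₂.isStandard
  · exact isStandard_single_mul hx h₂ hd
  rcases h₂.eq_one_or_single_or_ratio_le with ⟨rfl, rfl⟩ | ⟨y, hy, rfl, rfl⟩ | ⟨hl₂, -⟩
  · simpa using h₁.isStandard
  · rw [mul_comm v₁, add_comm j₁] at hd ⊢
    exact isStandard_single_mul hy h₁ hd
  · exact absurd hd (not_lowDefect_mul hl₁ hl₂ (by norm_num))

theorem IsStandard.mul {a b p q : ℕ} (ha : IsStandard a p) (hb : IsStandard b q)
    (hd : LowDefect (a * b) (p + q)) : IsStandard (a * b) (p + q) := by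
  obtain ⟨c₁, v₁, j₁, hv₁, hc₁, rfl⟩ := ha
  obtain ⟨c₂, v₂, j₂, hv₂, hc₂, rfl⟩ := hb
  rw [show 2 ^ c₁ * v₁ * (2 ^ c₂ * v₂) = 2 ^ (c₁ + c₂) * (v₁ * v₂) by ring] at hd ⊢
  exact ((hv₁.mul hv₂ (hd.of_two_pow_mul (by omega))).two_pow_mul _).mono (by omega)

theorem isStandard_of_canRepr {n k : ℕ} (h : CanRepr 2 n k) (hd : LowDefect n k) :
    IsStandard n k := by
  induction h with
  | base => exact isStandard_two_pow (e := 1) le_rfl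
  | @add a b p q ha hb iha ihb =>
    rcases le_total p q with hpq | hqp
    · exact isStandard_add ha hb ihb hpq hd
    · rw [add_comm a, add_comm p] at hd ⊢
      exact isStandard_add hb ha iha hqp hd
  | @mul a b p q ha hb iha ihb =>
    exact (iha (hd.of_mul_right (hb.le_pow_s14 le_rfl))).mul
      (ihb (hd.of_mul_left (ha.le_pow_s14 le_rfl))) hd

theorem two_pow_mul_odd_inj {i j u v : ℕ} (hu : Odd u) (hv : Odd v)
    (h : 2 ^ i * u = 2 ^ j * v) : i = j ∧ u = v := by
  wlog hij : i ≤ j generalizing i j u v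
  · obtain ⟨h₁, h₂⟩ := this hv hu h.symm (by omega)
    exact ⟨h₁.symm, h₂.symm⟩
  obtain ⟨d, rfl⟩ := Nat.exists_eq_add_of_le hij
  rw [pow_add, mul_assoc] at h
  have hu' := Nat.eq_of_mul_eq_mul_left (Nat.two_pow_pos i) h
  obtain _ | d := d
  · simpa using hu'
  · rw [hu', pow_succ, mul_comm _ 2, mul_assoc] at hu
    exact absurd (even_two_mul _) (Nat.not_even_iff_odd.2 hu)

theorem odd_two_pow_add_one {x : ℕ} (hx : x ≠ 0) : Odd (2 ^ x + 1) :=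
  (Nat.even_pow.2 ⟨even_two, hx⟩).add_one

theorem lt_ten_of_two_pow_lt_five_pow {x r : ℕ} (h : 2 ^ x < 5 ^ r) (hr : r ≤ 4) : x < 10 := by
  have : 5 ^ r ≤ 5 ^ 4 := Nat.pow_le_pow_right (by norm_num) hr
  exact (Nat.pow_lt_pow_iff_right (by norm_num)).1 (by omega : 2 ^ x < 2 ^ 10)

theorem two_pow_add_one_eq_five_pow {x r : ℕ} (h : 2 ^ x + 1 = 5 ^ r) (hr : r ≤ 4) :
    x = 2 ∧ r = 1 := by
  have hx := lt_ten_of_two_pow_lt_five_pow (x := x) (by omega) hr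
  have : ∀ r < 5, ∀ x < 10, 2 ^ x + 1 = 5 ^ r → x = 2 ∧ r = 1 := by decide
  exact this r (by omega) x hx h

set_option synthInstance.maxSize 1000 in
theorem two_pow_add_one_mul_eq_five_pow {x y r : ℕ} (h : (2 ^ x + 1) * (2 ^ y + 1) = 5 ^ r)
    (hr : r ≤ 4) : x = 2 ∧ y = 2 ∧ r = 2 := by
  have hx := lt_ten_of_two_pow_lt_five_pow (x := x)
    (by have := Nat.le_mul_of_pos_right (2 ^ x + 1) (by positivity : 0 < 2 ^ y + 1); omega) hr
  have hy := lt_ten_of_two_pow_lt_five_pow (x := y)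
    (by have := Nat.le_mul_of_pos_left (2 ^ y + 1) (by positivity : 0 < 2 ^ x + 1); omega) hr
  have : ∀ r < 5, ∀ x < 10, ∀ y < 10, (2 ^ x + 1) * (2 ^ y + 1) = 5 ^ r →
      x = 2 ∧ y = 2 ∧ r = 2 := by decide
  exact this r (by omega) x hx y hy h

set_option synthInstance.maxSize 1000 in
theorem two_pow_mul_add_one_eq_five_pow {b y r : ℕ} (h : 2 ^ b * (2 ^ y + 1) + 1 = 5 ^ r)
    (hy : 1 ≤ y) (hr : r ≤ 4) : b = 3 ∧ y = 1 ∧ r = 2 := by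
  have hb := lt_ten_of_two_pow_lt_five_pow (x := b)
    (by have := Nat.le_mul_of_pos_right (2 ^ b) (by positivity : 0 < 2 ^ y + 1); omega) hr
  have hy' := lt_ten_of_two_pow_lt_five_pow (x := y)
    (by have := Nat.le_mul_of_pos_left (2 ^ y + 1) (Nat.two_pow_pos b); omega) hr
  have : ∀ r < 5, ∀ b < 10, ∀ y < 10, 2 ^ b * (2 ^ y + 1) + 1 = 5 ^ r → 1 ≤ y →
      b = 3 ∧ y = 1 ∧ r = 2 := by decide
  exact this r (by omega) b hb y hy' h hy

theorem IsStandard.le_of_two_pow_mul_ten_pow {m r k : ℕ} (h : IsStandard (2 ^ m * 10 ^ r) k)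
    (hr1 : 1 ≤ r) (hr4 : r ≤ 4) : m + 4 * r ≤ k := by
  obtain ⟨c, v, j, hv, hk, h⟩ := h
  have h5 : Odd (5 ^ r) := Odd.pow (by decide)
  rw [show 2 ^ m * 10 ^ r = 2 ^ (m + r) * 5 ^ r by
    rw [pow_add, mul_assoc, ← mul_pow]; norm_num] at h
  cases hv with
  | one =>
    have := (two_pow_mul_odd_inj h5 odd_one (by simpa using h)).2
    simp at this
    omega
  | @single x hx =>
    rw [show 2 ^ c * (2 * (2 ^ x + 1)) = 2 ^ (c + 1) * (2 ^ x + 1) by ring] at h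
    obtain ⟨hc, h'⟩ := two_pow_mul_odd_inj h5 (odd_two_pow_add_one (by omega)) h
    obtain ⟨rfl, rfl⟩ := two_pow_add_one_eq_five_pow h'.symm hr4
    omega
  | @prod x y hx hy =>
    rw [show 2 ^ c * (4 * ((2 ^ x + 1) * (2 ^ y + 1))) = 2 ^ (c + 2) * ((2 ^ x + 1) * (2 ^ y + 1))
      by ring] at h
    obtain ⟨hc, h'⟩ := two_pow_mul_odd_inj h5
      ((odd_two_pow_add_one (by omega)).mul (odd_two_pow_add_one (by omega))) h
    obtain ⟨rfl, rfl, rfl⟩ := two_pow_add_one_mul_eq_five_pow h'.symm hr4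
    omega
  | @nested b y hb hy =>
    rw [show 2 ^ c * (2 * (2 ^ b * (2 ^ y + 1) + 1)) = 2 ^ (c + 1) * (2 ^ b * (2 ^ y + 1) + 1)
      by ring] at h
    have hodd : Odd (2 ^ b * (2 ^ y + 1) + 1) :=
      ((Nat.even_pow.2 ⟨even_two, by omega⟩).mul_right _).add_one
    obtain ⟨hc, h'⟩ := two_pow_mul_odd_inj h5 hodd h
    obtain ⟨rfl, rfl, rfl⟩ := two_pow_mul_add_one_eq_five_pow h'.symm hy hr4
    omega

theorem lowDefect_two_pow_mul_ten_pow {m r k : ℕ} (hr : r ≤ 4) (hk : k < m + 4 * r) :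
    LowDefect (2 ^ m * 10 ^ r) k := by
  have h1 : 2 ^ (k + 1) ≤ 2 ^ (m + 4 * r) := Nat.pow_le_pow_right two_pos hk
  have h2 : 625 * 16 ^ r ≤ 4096 * 10 ^ r := by interval_cases r <;> norm_num
  rw [pow_succ, pow_add, pow_mul] at h1
  norm_num at h1
  unfold LowDefect
  nlinarith [Nat.mul_le_mul_left (2 ^ m) h2]

end TwoComplexity

open TwoComplexity in
theorem stmt_14 (m r : ℕ) (hr1 : 1 ≤ r) (hr2 : r ≤ 4) :
    complexity 2 (2 ^ m * 10 ^ r) = m + 4 * r := by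
  have hrepr := canRepr_two_pow_mul_ten_pow m hr1
  refine le_antisymm (Nat.sInf_le hrepr) (le_csInf ⟨_, hrepr⟩ fun k hk => ?_)
  by_contra! hlt
  have hd := lowDefect_two_pow_mul_ten_pow hr2 hlt
  exact absurd ((isStandard_of_canRepr hk hd).le_of_two_pow_mul_ten_pow hr1 hr2) (not_le.2 hlt)
end
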